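/- Let {Z^k} ⊂ ℂ^{n×N} converge to Z*, and for each k let B^k ∈ argmin{‖Z^k − B‖_F² : ‖B‖₀ ≤ s}. Then every accumulation point of {B^k} is a minimizer of ‖Z* − B‖_F² over {B : ‖B‖₀ ≤ s}. -/
import Mathlib


open Matrix BigOperators Filter

/-- Number of nonzero entries of a matrix (the "ℓ₀ norm"). -/
noncomputable def l0 {n N : ℕ} (B : Matrix (Fin n) (Fin N) ℂ) : ℕ :=
  Nat.card {q : Fin n × Fin N // B q.1 q.2 ≠ 0}

/-- Squared Frobenius norm. -/
noncomputable def frobSq {n N : ℕ} (M : Matrix (Fin n) (Fin N) ℂ) : ℝ :=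
  ∑ i, ∑ j, ‖M i j‖^2

lemma l0_eq_card {n N : ℕ} (B : Matrix (Fin n) (Fin N) ℂ) :
    l0 B = (Finset.univ.filter (fun q : Fin n × Fin N => B q.1 q.2 ≠ 0)).card := by
  classical
  rw [l0, Nat.card_eq_fintype_card, Fintype.card_subtype]

lemma tendsto_frobSq {n N : ℕ} (M : ℕ → Matrix (Fin n) (Fin N) ℂ)
    (Mstar : Matrix (Fin n) (Fin N) ℂ)
    (h : ∀ i j, Tendsto (fun k => M k i j) atTop (nhds (Mstar i j))) :
    Tendsto (fun k => frobSq (M k)) atTop (nhds (frobSq Mstar)) := by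
  unfold frobSq
  apply tendsto_finset_sum
  intro i _
  apply tendsto_finset_sum
  intro j _
  exact ((h i j).norm).pow 2

/-- Upper semicontinuity of the projection onto the s-ℓ₀ ball: if Zᵏ → Z* and each Bᵏ
is an optimal s-sparse projection of Zᵏ, then every accumulation point of {Bᵏ} is an
optimal s-sparse projection of Z*. -/
theorem stmt14 {n N : ℕ} (s : ℕ) (Zseq : ℕ → Matrix (Fin n) (Fin N) ℂ)
    (Zstar : Matrix (Fin n) (Fin N) ℂ)
    (Bseq : ℕ → Matrix (Fin n) (Fin N) ℂ)
    (hZ : ∀ i j, Tendsto (fun k => Zseq k i j) atTop (nhds (Zstar i j)))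
    (hBmin : ∀ k, l0 (Bseq k) ≤ s ∧
      ∀ B : Matrix (Fin n) (Fin N) ℂ, l0 B ≤ s →
        frobSq (Zseq k - Bseq k) ≤ frobSq (Zseq k - B))
    (Bstar : Matrix (Fin n) (Fin N) ℂ) (φ : ℕ → ℕ) (hφ : StrictMono φ)
    (hacc : ∀ i j, Tendsto (fun k => Bseq (φ k) i j) atTop (nhds (Bstar i j))) :
    l0 Bstar ≤ s ∧
    ∀ B : Matrix (Fin n) (Fin N) ℂ, l0 B ≤ s →
      frobSq (Zstar - Bstar) ≤ frobSq (Zstar - B) := by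
  classical
  have hZφ : ∀ i j, Tendsto (fun k => Zseq (φ k) i j) atTop (nhds (Zstar i j)) :=
    fun i j => (hZ i j).comp hφ.tendsto_atTop
  constructor
  · -- support of Bstar eventually contained in support of Bseq (φ k)
    set S := Finset.univ.filter (fun q : Fin n × Fin N => Bstar q.1 q.2 ≠ 0) with hS
    have hev : ∀ᶠ k in atTop, ∀ q ∈ S, Bseq (φ k) q.1 q.2 ≠ 0 := by
      rw [Finset.eventually_all]
      intro q hq
      have hne : Bstar q.1 q.2 ≠ 0 := (Finset.mem_filter.mp hq).2
      exact (hacc q.1 q.2).eventually_ne hne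
    obtain ⟨k, hk⟩ := hev.exists
    calc l0 Bstar = S.card := l0_eq_card Bstar
      _ ≤ (Finset.univ.filter (fun q : Fin n × Fin N => Bseq (φ k) q.1 q.2 ≠ 0)).card := by
          apply Finset.card_le_card
          intro q hq
          exact Finset.mem_filter.mpr ⟨Finset.mem_univ q, hk q hq⟩
      _ = l0 (Bseq (φ k)) := (l0_eq_card _).symm
      _ ≤ s := (hBmin (φ k)).1
  · intro B hB
    have h1 : Tendsto (fun k => frobSq (Zseq (φ k) - Bseq (φ k))) atTop
        (nhds (frobSq (Zstar - Bstar))) := by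
      apply tendsto_frobSq
      intro i j
      exact (hZφ i j).sub (hacc i j)
    have h2 : Tendsto (fun k => frobSq (Zseq (φ k) - B)) atTop
        (nhds (frobSq (Zstar - B))) := by
      apply tendsto_frobSq
      intro i j
      exact (hZφ i j).sub tendsto_const_nhds
    exact le_of_tendsto_of_tendsto' h1 h2 (fun k => (hBmin (φ k)).2 B hB)
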